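/- Let C be an N×N Hermitian positive semidefinite complex matrix, h ∈ ℂ^N, σ² > 0, and let d_i > 0, P_i > 0 for i = 1, …, N. Then the supremum over {a ∈ ℂ^N : |a_i|² d_i ≤ P_i for all i} of |h^H a|²/(a^H C a + σ²) equals the supremum over the set {(ã, t) ∈ ℂ^N × ℝ : ã^H C ã + σ² t² = 1 and |ã_i|² d_i ≤ t² P_i for all i} of |h^H ã|². -/

import Mathlib

/-!
Both suprema are taken over the same set of values. Writing `q a = (aᴴ C a).re ≥ 0`, a feasible
`a` is sent to `(t • a, t)` with `t = (q a + σ²)^(-1/2)`, which satisfies the normalisation and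
turns the ratio into `|hᴴ (t • a)|²`; conversely a homogenized point `(ã, t)` has `t ≠ 0` and is
sent back to `t⁻¹ • ã`. Both maps only rescale by a real number, under which every quantity
involved is homogeneous of degree two.
-/

open Matrix ComplexOrder

lemma Complex.norm_ofReal_mul_sq (t : ℝ) (z : ℂ) : ‖(t : ℂ) * z‖ ^ 2 = t ^ 2 * ‖z‖ ^ 2 := by
  rw [norm_mul, mul_pow, Complex.norm_real, Real.norm_eq_abs, sq_abs]

lemma norm_ofReal_smul_apply_sq_mul {ι : Type*} (a : ι → ℂ) (t c : ℝ) (i : ι) :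
    ‖((t : ℂ) • a) i‖ ^ 2 * c = t ^ 2 * (‖a i‖ ^ 2 * c) := by
  rw [Pi.smul_apply, smul_eq_mul, Complex.norm_ofReal_mul_sq, mul_assoc]

namespace Matrix

variable {n : Type*} [Fintype n]

lemma norm_dotProduct_ofReal_smul_sq (v a : n → ℂ) (t : ℝ) :
    ‖v ⬝ᵥ ((t : ℂ) • a)‖ ^ 2 = t ^ 2 * ‖v ⬝ᵥ a‖ ^ 2 := by
  rw [dotProduct_smul, smul_eq_mul, Complex.norm_ofReal_mul_sq]

lemma re_star_ofReal_smul_dotProduct_mulVec (C : Matrix n n ℂ) (a : n → ℂ) (t : ℝ) :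
    (star ((t : ℂ) • a) ⬝ᵥ C *ᵥ ((t : ℂ) • a)).re = t ^ 2 * (star a ⬝ᵥ C *ᵥ a).re := by
  have : star ((t : ℂ) • a) ⬝ᵥ C *ᵥ ((t : ℂ) • a) = (t : ℂ) ^ 2 * (star a ⬝ᵥ C *ᵥ a) := by
    rw [star_smul, Complex.star_def, Complex.conj_ofReal, mulVec_smul, smul_dotProduct,
      dotProduct_smul, smul_eq_mul, smul_eq_mul]
    ring
  rw [this, ← Complex.ofReal_pow, Complex.re_ofReal_mul]

lemma PosSemidef.re_dotProduct_mulVec_nonneg {C : Matrix n n ℂ} (hC : C.PosSemidef)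
    (a : n → ℂ) : 0 ≤ (star a ⬝ᵥ C *ᵥ a).re :=
  (Complex.nonneg_iff.mp (hC.dotProduct_mulVec_nonneg a)).1

end Matrix

section Homogenization

open Matrix

variable {n : Type*} [Fintype n] {C : Matrix n n ℂ} {σ2 : ℝ} {d P : n → ℝ}

lemma exists_homogenization (hC : C.PosSemidef) (hσ2 : 0 < σ2) (v : n → ℂ) {a : n → ℂ}
    (ha : ∀ i, ‖a i‖ ^ 2 * d i ≤ P i) :
    ∃ (b : n → ℂ) (t : ℝ), (star b ⬝ᵥ C *ᵥ b).re + σ2 * t ^ 2 = 1 ∧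
      (∀ i, ‖b i‖ ^ 2 * d i ≤ t ^ 2 * P i) ∧
      ‖v ⬝ᵥ a‖ ^ 2 / ((star a ⬝ᵥ C *ᵥ a).re + σ2) = ‖v ⬝ᵥ b‖ ^ 2 := by
  have hs : 0 < (star a ⬝ᵥ C *ᵥ a).re + σ2 := by
    linarith [hC.re_dotProduct_mulVec_nonneg a]
  set t : ℝ := (Real.sqrt ((star a ⬝ᵥ C *ᵥ a).re + σ2))⁻¹
  have ht : t ^ 2 = ((star a ⬝ᵥ C *ᵥ a).re + σ2)⁻¹ := by
    rw [inv_pow, Real.sq_sqrt hs.le]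
  refine ⟨(t : ℂ) • a, t, ?_, fun i => ?_, ?_⟩
  · rw [re_star_ofReal_smul_dotProduct_mulVec, ht]
    field_simp
  · rw [norm_ofReal_smul_apply_sq_mul]
    exact mul_le_mul_of_nonneg_left (ha i) (sq_nonneg t)
  · rw [norm_dotProduct_ofReal_smul_sq, ht, div_eq_inv_mul]

lemma ne_zero_of_homogenized (hd : ∀ i, 0 < d i) {a : n → ℂ} {t : ℝ}
    (hnorm : (star a ⬝ᵥ C *ᵥ a).re + σ2 * t ^ 2 = 1) (ha : ∀ i, ‖a i‖ ^ 2 * d i ≤ t ^ 2 * P i) :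
    t ≠ 0 := by
  rintro rfl
  have ha0 : a = 0 := funext fun i => by
    have hi : ‖a i‖ ^ 2 * d i ≤ 0 := by simpa using ha i
    simpa using nonpos_of_mul_nonpos_left hi (hd i)
  simp [ha0] at hnorm

lemma exists_dehomogenization (hd : ∀ i, 0 < d i) (v : n → ℂ) {a : n → ℂ} {t : ℝ}
    (hnorm : (star a ⬝ᵥ C *ᵥ a).re + σ2 * t ^ 2 = 1) (ha : ∀ i, ‖a i‖ ^ 2 * d i ≤ t ^ 2 * P i) :
    ∃ b : n → ℂ, (∀ i, ‖b i‖ ^ 2 * d i ≤ P i) ∧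
      ‖v ⬝ᵥ a‖ ^ 2 = ‖v ⬝ᵥ b‖ ^ 2 / ((star b ⬝ᵥ C *ᵥ b).re + σ2) := by
  have ht : t ≠ 0 := ne_zero_of_homogenized hd hnorm ha
  refine ⟨((t⁻¹ : ℝ) : ℂ) • a, fun i => ?_, ?_⟩
  · rw [norm_ofReal_smul_apply_sq_mul, inv_pow, inv_mul_le_iff₀ (by positivity)]
    exact ha i
  · have hden : (t⁻¹) ^ 2 * (star a ⬝ᵥ C *ᵥ a).re + σ2 = (t ^ 2)⁻¹ :=
      calc (t⁻¹) ^ 2 * (star a ⬝ᵥ C *ᵥ a).re + σ2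
          = (t ^ 2)⁻¹ * ((star a ⬝ᵥ C *ᵥ a).re + σ2 * t ^ 2) := by field_simp
        _ = (t ^ 2)⁻¹ := by rw [hnorm, mul_one]
    rw [norm_dotProduct_ofReal_smul_sq, re_star_ofReal_smul_dotProduct_mulVec, hden]
    field_simp

end Homogenization

theorem qcrq_homogenization_general
    (N : ℕ) (C : Matrix (Fin N) (Fin N) ℂ) (hC : C.PosSemidef)
    (h : Fin N → ℂ) (σ2 : ℝ) (hσ2 : 0 < σ2)
    (d P : Fin N → ℝ) (hd : ∀ i, 0 < d i) :
    sSup {x : ℝ | ∃ a : Fin N → ℂ, (∀ i, ‖a i‖ ^ 2 * d i ≤ P i) ∧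
        x = ‖star h ⬝ᵥ a‖ ^ 2 / ((star a ⬝ᵥ C *ᵥ a).re + σ2)} =
    sSup {x : ℝ | ∃ (a : Fin N → ℂ) (t : ℝ),
        (star a ⬝ᵥ C *ᵥ a).re + σ2 * t ^ 2 = 1 ∧
        (∀ i, ‖a i‖ ^ 2 * d i ≤ t ^ 2 * P i) ∧
        x = ‖star h ⬝ᵥ a‖ ^ 2} := by
  congr 1
  ext x
  constructor
  · rintro ⟨a, ha, rfl⟩
    exact exists_homogenization hC hσ2 (star h) ha
  · rintro ⟨a, t, hnorm, ha, rfl⟩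
    exact exists_dehomogenization hd (star h) hnorm ha

/-- QCRQ homogenization: the supremum of `|h^H a|²/(a^H C a + σ²)` over the
individual power constraints `|aᵢ|² dᵢ ≤ Pᵢ` equals the supremum of `|h^H ã|²`
over `{(ã,t) : ã^H C ã + σ² t² = 1, |ãᵢ|² dᵢ ≤ t² Pᵢ}`. -/
theorem qcrq_homogenization
    (N : ℕ) (C : Matrix (Fin N) (Fin N) ℂ) (hC : C.PosSemidef)
    (h : Fin N → ℂ) (σ2 : ℝ) (hσ2 : 0 < σ2)
    (d P : Fin N → ℝ) (hd : ∀ i, 0 < d i) (hP : ∀ i, 0 < P i) :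
    sSup {x : ℝ | ∃ a : Fin N → ℂ, (∀ i, ‖a i‖ ^ 2 * d i ≤ P i) ∧
        x = ‖star h ⬝ᵥ a‖ ^ 2 / ((star a ⬝ᵥ C *ᵥ a).re + σ2)} =
    sSup {x : ℝ | ∃ (a : Fin N → ℂ) (t : ℝ),
        (star a ⬝ᵥ C *ᵥ a).re + σ2 * t ^ 2 = 1 ∧
        (∀ i, ‖a i‖ ^ 2 * d i ≤ t ^ 2 * P i) ∧
        x = ‖star h ⬝ᵥ a‖ ^ 2} :=
  qcrq_homogenization_general N C hC h σ2 hσ2 d P hd
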